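/- For every d > 0, the function F_d^D is continuous on ℝ \ Π_d^D and strictly increasing on each connected component of ℝ \ Π_d^D. -/

import Mathlib

/-- The set `Π_d^D = { (2πk/d)² : k ∈ ℕ, k ≥ 1 }`. -/
noncomputable def PiD (d : ℝ) : Set ℝ :=
  {x | ∃ k : ℕ, 1 ≤ k ∧ x = (2 * Real.pi * k / d) ^ 2}

/-- The function `F_d^D`. -/
noncomputable def FD (d lam : ℝ) : ℝ :=
  if 0 < lam then
    -2 * Real.sqrt lam * (Real.cos (d * Real.sqrt lam / 2) / Real.sin (d * Real.sqrt lam / 2))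
  else if lam = 0 then -4 / d
  else
    -2 * Real.sqrt (-lam) *
      (Real.cosh (d * Real.sqrt (-lam) / 2) / Real.sinh (d * Real.sqrt (-lam) / 2))

open Real Set Filter Topology

lemma FD_pos_eq {d x : ℝ} (hx : 0 < x) :
    FD d x = -2 * Real.sqrt x * (Real.cos (d * Real.sqrt x / 2) / Real.sin (d * Real.sqrt x / 2)) := by
  simp [FD, hx]

lemma FD_neg_eq {d x : ℝ} (hx : x < 0) :
    FD d x = -2 * Real.sqrt (-x) *
      (Real.cosh (d * Real.sqrt (-x) / 2) / Real.sinh (d * Real.sqrt (-x) / 2)) := by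
  simp [FD, not_lt.mpr hx.le, hx.ne]

lemma FD_zero {d : ℝ} : FD d 0 = -4 / d := by simp [FD]

/-- On the complement of `PiD d`, positive points have nonvanishing sine. -/
lemma sin_ne_zero_of_not_mem {d x : ℝ} (hd : 0 < d) (hx : 0 < x) (h : x ∉ PiD d) :
    Real.sin (d * Real.sqrt x / 2) ≠ 0 := by
  intro hs
  rcases Real.sin_eq_zero_iff.mp hs with ⟨n, hn⟩
  have hsx : 0 < Real.sqrt x := Real.sqrt_pos.mpr hx
  have hpos : 0 < d * Real.sqrt x / 2 := by positivity
  have hnpos : 0 < (n : ℝ) := by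
    by_contra hc
    push_neg at hc
    have : (n : ℝ) * Real.pi ≤ 0 := mul_nonpos_of_nonpos_of_nonneg hc Real.pi_pos.le
    linarith [hn ▸ hpos]
  have hn1 : 1 ≤ n := by exact_mod_cast hnpos
  apply h
  refine ⟨n.toNat, ?_, ?_⟩
  · omega
  · have hcast : ((n.toNat : ℕ) : ℝ) = (n : ℝ) := by
      norm_cast; omega
    have hsq : Real.sqrt x = 2 * Real.pi * n / d := by
      field_simp at hn ⊢
      linarith [hn]
    rw [hcast, ← hsq, Real.sq_sqrt hx.le]

/-- derivative at positive points -/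
lemma hasDerivAt_FD_pos {d x : ℝ} (hd : 0 < d) (hx : 0 < x)
    (hs : Real.sin (d * Real.sqrt x / 2) ≠ 0) :
    ∃ f' : ℝ, HasDerivAt (FD d) f' x ∧ 0 < f' := by
  have hs0 : 0 < Real.sqrt x := Real.sqrt_pos.mpr hx
  set s := Real.sqrt x with hsdef
  set u := d * s / 2 with hudef
  have hu0 : 0 < u := by positivity
  have hsq : HasDerivAt Real.sqrt (1 / (2 * s)) x := Real.hasDerivAt_sqrt hx.ne'
  have hu : HasDerivAt (fun y => d * Real.sqrt y / 2) (d * (1 / (2 * s)) / 2) x :=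
    (hsq.const_mul d).div_const 2
  have hcos : HasDerivAt (fun y => Real.cos (d * Real.sqrt y / 2))
      (-Real.sin u * (d * (1 / (2 * s)) / 2)) x := by
    have h := (Real.hasDerivAt_cos u).comp x hu; exact h
  have hsin : HasDerivAt (fun y => Real.sin (d * Real.sqrt y / 2))
      (Real.cos u * (d * (1 / (2 * s)) / 2)) x := by
    have h := (Real.hasDerivAt_sin u).comp x hu; exact h
  have hnum : HasDerivAt (fun y => -2 * Real.sqrt y * Real.cos (d * Real.sqrt y / 2))
      ((-2 * (1 / (2 * s))) * Real.cos u + (-2 * s) * (-Real.sin u * (d * (1 / (2 * s)) / 2))) x :=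
    (hsq.const_mul (-2)).mul hcos
  have hdiv := hnum.div hsin hs
  have heq : FD d =ᶠ[𝓝 x] fun y =>
      (-2 * Real.sqrt y * Real.cos (d * Real.sqrt y / 2)) / Real.sin (d * Real.sqrt y / 2) := by
    filter_upwards [Ioi_mem_nhds hx] with y hy
    rw [FD_pos_eq hy]
    exact (mul_div_assoc _ _ _).symm
  refine ⟨_, hdiv.congr_of_eventuallyEq heq, ?_⟩
  have pyth := Real.sin_sq_add_cos_sq u
  have key : Real.sin u * Real.cos u < u := by
    have h1 := Real.sin_lt (show (0:ℝ) < 2 * u by positivity)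
    have h2 : Real.sin (2 * u) = 2 * Real.sin u * Real.cos u := Real.sin_two_mul u
    linarith [h2 ▸ h1]
  have hsne : s ≠ 0 := hs0.ne'
  have hA : (-2 * (1 / (2 * s)) * Real.cos u + -2 * s * (-Real.sin u * (d * (1 / (2 * s)) / 2))) *
        Real.sin u - -2 * s * Real.cos u * (Real.cos u * (d * (1 / (2 * s)) / 2)) =
      (u - Real.sin u * Real.cos u) / s := by
    rw [hudef]
    field_simp
    linear_combination (s * d) * Real.sin_sq_add_cos_sq (s * d / 2)
  have hsin2 : 0 < Real.sin u ^ 2 := by positivity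
  rw [hsdef] at hdiv ⊢
  rw [hA]
  exact div_pos (div_pos (by linarith) hs0) hsin2

lemma hasDerivAt_FD_neg {d x : ℝ} (hd : 0 < d) (hx : x < 0) :
    ∃ f' : ℝ, HasDerivAt (FD d) f' x ∧ 0 < f' := by
  have hx' : 0 < -x := by linarith
  have hs0 : 0 < Real.sqrt (-x) := Real.sqrt_pos.mpr hx'
  set s := Real.sqrt (-x) with hsdef
  set u := d * s / 2 with hudef
  have hu0 : 0 < u := by positivity
  have hsinh0 : Real.sinh u ≠ 0 := (Real.sinh_pos_iff.mpr hu0).ne'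
  have hneg : HasDerivAt (fun y : ℝ => -y) (-1) x := (hasDerivAt_id x).neg
  have hsq : HasDerivAt (fun y => Real.sqrt (-y)) (1 / (2 * s) * -1) x :=
    (Real.hasDerivAt_sqrt hx'.ne').comp x hneg
  have hu : HasDerivAt (fun y => d * Real.sqrt (-y) / 2) (d * (1 / (2 * s) * -1) / 2) x :=
    (hsq.const_mul d).div_const 2
  have hcosh : HasDerivAt (fun y => Real.cosh (d * Real.sqrt (-y) / 2))
      (Real.sinh u * (d * (1 / (2 * s) * -1) / 2)) x := by
    have h := (Real.hasDerivAt_cosh u).comp x hu; exact h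
  have hsinh : HasDerivAt (fun y => Real.sinh (d * Real.sqrt (-y) / 2))
      (Real.cosh u * (d * (1 / (2 * s) * -1) / 2)) x := by
    have h := (Real.hasDerivAt_sinh u).comp x hu; exact h
  have hnum : HasDerivAt (fun y => -2 * Real.sqrt (-y) * Real.cosh (d * Real.sqrt (-y) / 2))
      ((-2 * (1 / (2 * s) * -1)) * Real.cosh u +
        (-2 * s) * (Real.sinh u * (d * (1 / (2 * s) * -1) / 2))) x :=
    (hsq.const_mul (-2)).mul hcosh
  have hdiv := hnum.div hsinh hsinh0
  have heq : FD d =ᶠ[𝓝 x] fun y =>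
      (-2 * Real.sqrt (-y) * Real.cosh (d * Real.sqrt (-y) / 2)) /
        Real.sinh (d * Real.sqrt (-y) / 2) := by
    filter_upwards [Iio_mem_nhds hx] with y hy
    rw [FD_neg_eq hy]
    exact (mul_div_assoc _ _ _).symm
  refine ⟨_, hdiv.congr_of_eventuallyEq heq, ?_⟩
  have key : u < Real.sinh u * Real.cosh u := by
    have h1 := Real.self_lt_sinh_iff.mpr (show (0:ℝ) < 2 * u by positivity)
    have h2 : Real.sinh (2 * u) = 2 * Real.sinh u * Real.cosh u := Real.sinh_two_mul u
    linarith [h2 ▸ h1]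
  have hsne : s ≠ 0 := hs0.ne'
  have hA : (-2 * (1 / (2 * s) * -1) * Real.cosh u +
        -2 * s * (Real.sinh u * (d * (1 / (2 * s) * -1) / 2))) * Real.sinh u -
        -2 * s * Real.cosh u * (Real.cosh u * (d * (1 / (2 * s) * -1) / 2)) =
      (Real.sinh u * Real.cosh u - u) / s := by
    rw [hudef]
    field_simp
    linear_combination (-(s * d)) * Real.cosh_sq_sub_sinh_sq (s * d / 2)
  have hsinh2 : 0 < Real.sinh u ^ 2 := by positivity
  rw [hsdef] at hdiv ⊢
  rw [hA]
  exact div_pos (div_pos (by linarith) hs0) hsinh2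

lemma tendsto_self_div_sin : Tendsto (fun u : ℝ => u / Real.sin u) (𝓝[≠] (0:ℝ)) (𝓝 1) := by
  have h : Tendsto (slope Real.sin 0) (𝓝[≠] (0:ℝ)) (𝓝 1) := by
    have := hasDerivAt_iff_tendsto_slope.mp (Real.hasDerivAt_sin 0)
    simpa using this
  have h2 := h.inv₀ one_ne_zero
  rw [inv_one] at h2
  refine h2.congr fun u => ?_
  simp [slope_def_field, div_eq_mul_inv, mul_comm]

lemma tendsto_self_div_sinh : Tendsto (fun u : ℝ => u / Real.sinh u) (𝓝[≠] (0:ℝ)) (𝓝 1) := by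
  have h : Tendsto (slope Real.sinh 0) (𝓝[≠] (0:ℝ)) (𝓝 1) := by
    have := hasDerivAt_iff_tendsto_slope.mp (Real.hasDerivAt_sinh 0)
    simpa using this
  have h2 := h.inv₀ one_ne_zero
  rw [inv_one] at h2
  refine h2.congr fun u => ?_
  simp [slope_def_field, div_eq_mul_inv, mul_comm]

lemma continuousAt_FD_zero {d : ℝ} (hd : 0 < d) : ContinuousAt (FD d) 0 := by
  rw [ContinuousAt, FD_zero, ← nhdsLT_sup_nhdsGE (0:ℝ), Filter.tendsto_sup]
  constructor
  · -- left limit, hyperbolic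
    have hmap : Tendsto (fun y : ℝ => d * Real.sqrt (-y) / 2) (𝓝[<] (0:ℝ)) (𝓝[≠] 0) := by
      apply tendsto_nhdsWithin_of_tendsto_nhds_of_eventually_within
      · have h0 : Tendsto (fun y : ℝ => d * Real.sqrt (-y) / 2) (𝓝 0)
            (𝓝 (d * Real.sqrt (-0) / 2)) :=
          ((continuous_const.mul (Real.continuous_sqrt.comp continuous_neg)).div_const 2).tendsto 0
        simpa using h0.mono_left nhdsWithin_le_nhds
      · filter_upwards [self_mem_nhdsWithin] with y (hy : y < 0)
        have h1 : 0 < Real.sqrt (-y) := Real.sqrt_pos.mpr (by linarith)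
        exact (show (0:ℝ) < d * Real.sqrt (-y) / 2 by positivity).ne'
    have hg : Tendsto (fun u : ℝ => -4 / d * (u / Real.sinh u * Real.cosh u))
        (𝓝[≠] (0:ℝ)) (𝓝 (-4 / d)) := by
      have hc : Tendsto Real.cosh (𝓝[≠] (0:ℝ)) (𝓝 1) := by
        simpa using (Real.continuous_cosh.tendsto 0).mono_left nhdsWithin_le_nhds
      have h1 := tendsto_self_div_sinh.mul hc
      rw [mul_one] at h1
      have h2 := (tendsto_const_nhds (x := -4 / d) (f := 𝓝[≠] (0:ℝ))).mul h1
      rwa [mul_one] at h2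
    refine (hg.comp hmap).congr' ?_
    filter_upwards [self_mem_nhdsWithin] with y (hy : y < 0)
    have h1 : 0 < Real.sqrt (-y) := Real.sqrt_pos.mpr (by linarith)
    have hs : Real.sinh (d * Real.sqrt (-y) / 2) ≠ 0 :=
      (Real.sinh_pos_iff.mpr (by positivity)).ne'
    rw [Function.comp_apply, FD_neg_eq hy]
    field_simp
    ring
  · -- right side: split off the point 0
    rw [show Ici (0:ℝ) = insert 0 (Ioi 0) by rw [Set.Ioi_insert], nhdsWithin_insert,
      Filter.tendsto_sup]
    constructor
    · rw [← FD_zero (d := d)]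
      exact tendsto_pure_nhds _ _
    · have hmap : Tendsto (fun y : ℝ => d * Real.sqrt y / 2) (𝓝[>] (0:ℝ)) (𝓝[≠] 0) := by
        apply tendsto_nhdsWithin_of_tendsto_nhds_of_eventually_within
        · have h0 : Tendsto (fun y : ℝ => d * Real.sqrt y / 2) (𝓝 0)
              (𝓝 (d * Real.sqrt 0 / 2)) :=
            ((continuous_const.mul Real.continuous_sqrt).div_const 2).tendsto 0
          simpa using h0.mono_left nhdsWithin_le_nhds
        · filter_upwards [self_mem_nhdsWithin] with y (hy : 0 < y)
          have h1 : 0 < Real.sqrt y := Real.sqrt_pos.mpr hy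
          exact (show (0:ℝ) < d * Real.sqrt y / 2 by positivity).ne'
      have hg : Tendsto (fun u : ℝ => -4 / d * (u / Real.sin u * Real.cos u))
          (𝓝[≠] (0:ℝ)) (𝓝 (-4 / d)) := by
        have hc : Tendsto Real.cos (𝓝[≠] (0:ℝ)) (𝓝 1) := by
          simpa using (Real.continuous_cos.tendsto 0).mono_left nhdsWithin_le_nhds
        have h1 := tendsto_self_div_sin.mul hc
        rw [mul_one] at h1
        have h2 := (tendsto_const_nhds (x := -4 / d) (f := 𝓝[≠] (0:ℝ))).mul h1
        rwa [mul_one] at h2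
      refine (hg.comp hmap).congr' ?_
      filter_upwards [self_mem_nhdsWithin] with y (hy : 0 < y)
      have h1 : 0 < Real.sqrt y := Real.sqrt_pos.mpr hy
      by_cases hs : Real.sin (d * Real.sqrt y / 2) = 0
      · rw [Function.comp_apply, FD_pos_eq hy]
        simp [hs]
      · rw [Function.comp_apply, FD_pos_eq hy]
        field_simp
        ring

lemma continuousOn_FD {d : ℝ} (hd : 0 < d) : ContinuousOn (FD d) (PiD d)ᶜ := by
  intro x hx
  rcases lt_trichotomy x 0 with h | h | h
  · obtain ⟨f', hf, _⟩ := hasDerivAt_FD_neg hd h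
    exact hf.continuousAt.continuousWithinAt
  · exact (h ▸ continuousAt_FD_zero hd).continuousWithinAt
  · obtain ⟨f', hf, _⟩ := hasDerivAt_FD_pos hd h (sin_ne_zero_of_not_mem hd h hx)
    exact hf.continuousAt.continuousWithinAt

lemma isOpen_compl_PiD {d : ℝ} (hd : 0 < d) : IsOpen (PiD d)ᶜ := by
  have : (PiD d)ᶜ = Iio ((2 * Real.pi / d) ^ 2) ∪
      {x | 0 < x ∧ Real.sin (d * Real.sqrt x / 2) ≠ 0} := by
    ext x
    simp only [mem_compl_iff, mem_union, mem_Iio, mem_setOf_eq]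
    constructor
    · intro hx
      by_cases hlt : x < (2 * Real.pi / d) ^ 2
      · exact Or.inl hlt
      · push_neg at hlt
        have hx0 : 0 < x := lt_of_lt_of_le (by positivity) hlt
        exact Or.inr ⟨hx0, sin_ne_zero_of_not_mem hd hx0 hx⟩
    · rintro (hlt | ⟨hx0, hsin⟩)
      · rintro ⟨k, hk, rfl⟩
        have h1 : (2 * Real.pi / d) ^ 2 ≤ (2 * Real.pi * k / d) ^ 2 := by
          have hk1 : (1 : ℝ) ≤ (k : ℝ) := by exact_mod_cast hk
          have h2 : 2 * Real.pi / d ≤ 2 * Real.pi * k / d := by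
            have : 2 * Real.pi ≤ 2 * Real.pi * k := by nlinarith [Real.pi_pos]
            gcongr
          have h3 : (0:ℝ) ≤ 2 * Real.pi / d := by positivity
          nlinarith
        linarith
      · exact fun hm => hsin (by
          rcases hm with ⟨k, hk, rfl⟩
          have hk0 : (0:ℝ) ≤ 2 * Real.pi * k / d := by positivity
          rw [Real.sqrt_sq hk0]
          have : d * (2 * Real.pi * k / d) / 2 = k * Real.pi := by
            field_simp
          rw [this]
          exact Real.sin_int_mul_pi k)
  rw [this]
  apply IsOpen.union isOpen_Iio
  have : {x : ℝ | 0 < x ∧ Real.sin (d * Real.sqrt x / 2) ≠ 0} =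
      Ioi 0 ∩ (fun x => Real.sin (d * Real.sqrt x / 2)) ⁻¹' {0}ᶜ := by
    ext x; simp [mem_setOf_eq, and_comm]
  rw [this]
  exact isOpen_Ioi.inter <| (Real.continuous_sin.comp <|
    ((continuous_const.mul Real.continuous_sqrt).div_const 2)).isOpen_preimage _ (isOpen_compl_singleton)

theorem stmt0 (d : ℝ) (hd : 0 < d) :
    ContinuousOn (FD d) (PiD d)ᶜ ∧
    ∀ x ∈ (PiD d)ᶜ, StrictMonoOn (FD d) (connectedComponentIn (PiD d)ᶜ x) := by
  refine ⟨continuousOn_FD hd, fun x hx => ?_⟩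
  set C := connectedComponentIn (PiD d)ᶜ x with hC
  have hCsub : C ⊆ (PiD d)ᶜ := connectedComponentIn_subset _ _
  have hCopen : IsOpen C := (isOpen_compl_PiD hd).connectedComponentIn
  have hCconn : IsPreconnected C := isPreconnected_connectedComponentIn
  have hCconv : Convex ℝ C := convex_iff_ordConnected.mpr hCconn.ordConnected
  have hcont : ContinuousOn (FD d) C := (continuousOn_FD hd).mono hCsub
  have hderiv : ∀ y ∈ C, y ≠ 0 → 0 < deriv (FD d) y := by
    intro y hy hy0
    rcases hy0.lt_or_gt with h | h
    · obtain ⟨f', hf, hf0⟩ := hasDerivAt_FD_neg hd h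
      rwa [hf.deriv]
    · obtain ⟨f', hf, hf0⟩ := hasDerivAt_FD_pos hd h (sin_ne_zero_of_not_mem hd h (hCsub hy))
      rwa [hf.deriv]
  by_cases h0 : (0 : ℝ) ∈ C
  · -- split at 0
    have hleft : StrictMonoOn (FD d) (C ∩ Iic 0) := by
      apply strictMonoOn_of_deriv_pos (hCconv.inter (convex_Iic 0))
        (hcont.mono inter_subset_left)
      intro y hy
      have hy1 : y ∈ C := interior_subset hy |>.1
      have hy2 : y ∈ interior (Iic (0:ℝ)) :=
        interior_mono inter_subset_right hy
      rw [interior_Iic] at hy2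
      exact hderiv y hy1 (ne_of_lt hy2)
    have hright : StrictMonoOn (FD d) (C ∩ Ici 0) := by
      apply strictMonoOn_of_deriv_pos (hCconv.inter (convex_Ici 0))
        (hcont.mono inter_subset_left)
      intro y hy
      have hy1 : y ∈ C := interior_subset hy |>.1
      have hy2 : y ∈ interior (Ici (0:ℝ)) :=
        interior_mono inter_subset_right hy
      rw [interior_Ici] at hy2
      exact hderiv y hy1 (ne_of_gt hy2)
    intro a ha b hb hab
    rcases le_or_gt b 0 with hb0 | hb0
    · exact hleft ⟨ha, hab.le.trans hb0⟩ ⟨hb, hb0⟩ hab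
    · rcases le_or_gt 0 a with ha0 | ha0
      · exact hright ⟨ha, ha0⟩ ⟨hb, hb0.le⟩ hab
      · calc FD d a < FD d 0 := hleft ⟨ha, ha0.le⟩ ⟨h0, self_mem_Iic⟩ ha0
          _ < FD d b := hright ⟨h0, self_mem_Ici⟩ ⟨hb, hb0.le⟩ hb0
  · apply strictMonoOn_of_deriv_pos hCconv hcont
    intro y hy
    rw [hCopen.interior_eq] at hy
    exact hderiv y hy (fun h => h0 (h ▸ hy))
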